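/- arXiv:2011.04953 — 2 statements merged into one kernel-verified Lean document; each statement's English description precedes it below -/
import Mathlib

section
/- Let A be an n×n symmetric random matrix with independent entries (up to symmetry) where the diagonal entries a_ii ∼ N(0, 2) and off-diagonal entries a_ij ∼ N(0, 1) (i < j). Then for all real x, E[det(x·I_n + A)] = H_n(x), the probabilists' Hermite polynomial of degree n. -/
open Real MeasureTheory ProbabilityTheory

/-- The standard Gaussian density `φ(x) = (1/√(2π)) e^{-x²/2}`. -/
noncomputable def gaussDensity (x : ℝ) : ℝ :=
  (Real.sqrt (2 * Real.pi))⁻¹ * Real.exp (-x ^ 2 / 2)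

/-- The probabilists' Hermite polynomial `H_k(x) = φ(x)⁻¹ (-d/dx)^k φ(x)`. -/
noncomputable def hermiteH (k : ℕ) (x : ℝ) : ℝ :=
  (gaussDensity x)⁻¹ * ((-1 : ℝ) ^ k * iteratedDeriv k gaussDensity x)

/-- A symmetric random matrix built from an iid `N(0,1)` array `ω`:
diagonal entries `√2·ω_ii ∼ N(0,2)`, off-diagonal entries `ω_{min,max} ∼ N(0,1)`,
independent up to symmetry. -/
noncomputable def symGauss2 (n : ℕ) (ω : Fin n → Fin n → ℝ) :
    Matrix (Fin n) (Fin n) ℝ :=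
  Matrix.of fun i j =>
    if i = j then Real.sqrt 2 * ω i i
    else if i < j then ω i j else ω j i

/-!
Expand the determinant by the Leibniz formula. In the term of a permutation `σ` the entry
`ω a b` (`a ≤ b`) occurs once for every `i` with `{i, σ i} = {a, b}`. The entries are independent
and centred with `E[ω a b ^ 2] = 1`, so the term has expectation `0` unless `σ` is an involution,
and then `sign σ * x ^ (number of fixed points)`. Removing the point `0` from an involution
(either it is fixed, or it is paired with a point that is fixed by the rest) shows that
`∑_{σ² = 1} sign σ X ^ fix σ` satisfies `p (n + 1) = X * p n - p n'`, the recursion of the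
probabilists' Hermite polynomials, and `φ⁽ⁿ⁾ = (-1)ⁿ Heₙ φ` identifies these with `hermiteH`.
-/

open Equiv Polynomial Function Finset

lemma integrable_id_gaussianReal (μ : ℝ) (v : NNReal) :
    Integrable (fun t => t) (gaussianReal μ v) :=
  memLp_one_iff_integrable.mp (by exact_mod_cast memLp_id_gaussianReal (μ := μ) (v := v) 1)

lemma integrable_mul_self_gaussianReal (μ : ℝ) (v : NNReal) :
    Integrable (fun t => t * t) (gaussianReal μ v) := by
  simpa only [sq, id] using (memLp_id_gaussianReal (μ := μ) (v := v) 2).integrable_sq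

lemma integral_mul_self_gaussianReal_zero (v : NNReal) :
    ∫ t, t * t ∂gaussianReal 0 v = v := by
  rw [← variance_fun_id_gaussianReal (μ := 0),
    variance_of_integral_eq_zero aemeasurable_id' integral_id_gaussianReal]
  simp only [sq]

lemma integral_affine_gaussianReal_zero (v : NNReal) (x c : ℝ) :
    ∫ t, (x + c * t) ∂gaussianReal 0 v = x := by
  rw [integral_add (integrable_const x) ((integrable_id_gaussianReal 0 v).const_mul c),
    integral_const_mul, integral_id_gaussianReal]
  simp

section IteratedProduct

variable {ι κ E 𝕜 : Type*} [Fintype ι] [Fintype κ] [MeasurableSpace E]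
  (μ : Measure E) [SigmaFinite μ]

theorem integral_prod_prod_eq_prod_prod [RCLike 𝕜] (g : ι → κ → E → 𝕜) :
    ∫ ω : ι → κ → E, ∏ a, ∏ b, g a b (ω a b) ∂(Measure.pi fun _ => Measure.pi fun _ => μ) =
      ∏ a, ∏ b, ∫ t, g a b t ∂μ := by
  rw [integral_fintype_prod_eq_prod (E := fun _ => κ → E) (fun a η => ∏ b, g a b (η b))]
  simp only [integral_fintype_prod_eq_prod]

theorem integrable_prod_prod [NormedCommRing 𝕜] {g : ι → κ → E → 𝕜}
    (hg : ∀ a b, Integrable (g a b) μ) :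
    Integrable (fun ω : ι → κ → E => ∏ a, ∏ b, g a b (ω a b))
      (Measure.pi fun _ => Measure.pi fun _ => μ) :=
  Integrable.fintype_prod (E := κ → E) (f := fun a η => ∏ b, g a b (η b))
    fun a => Integrable.fintype_prod (hg a)

end IteratedProduct

lemma hermiteH_eq_aeval_hermite (n : ℕ) (x : ℝ) : hermiteH n x = aeval x (hermite n) := by
  have hφ : gaussDensity = fun y => (√(2 * π))⁻¹ * exp (-(y ^ 2 / 2)) := by
    ext y; rw [gaussDensity, neg_div]
  rw [hermiteH, hφ, iteratedDeriv_const_mul_field, iteratedDeriv_eq_iterate,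
    deriv_gaussian_eq_hermite_mul_gaussian]
  have hsqrt : 0 < √(2 * π) := by positivity
  field_simp
  simp [← pow_mul, pow_mul']

instance {α : Type*} [Fintype α] [DecidableEq α] (f : α → α) : Decidable (Involutive f) :=
  inferInstanceAs (Decidable (∀ a, f (f a) = a))

namespace Equiv.Perm

section Involutions

variable {α : Type*} [Fintype α] [DecidableEq α]

def numFixedPoints (σ : Perm α) : ℕ := #{a | σ a = a}

noncomputable def involutionTerm (σ : Perm α) : ℤ[X] :=
  if Involutive σ then C (sign σ : ℤ) * X ^ σ.numFixedPoints else 0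

end Involutions

variable {n : ℕ} (τ : Perm (Fin n))

-- `decomposeFin.symm (p, τ)` maps `0 ↦ p` and `i.succ ↦ swap 0 p (τ i).succ`.

lemma involutive_decomposeFin_symm_zero_iff :
    Involutive (decomposeFin.symm (0, τ)) ↔ Involutive τ := by
  simp [Involutive, Fin.forall_fin_succ, decomposeFin_symm_apply_zero]

lemma numFixedPoints_decomposeFin_symm_zero :
    (decomposeFin.symm (0, τ)).numFixedPoints = τ.numFixedPoints + 1 := by
  simp [numFixedPoints, Fin.card_filter_univ_succ, decomposeFin_symm_apply_zero]

lemma involutive_decomposeFin_symm_succ_iff (j : Fin n) :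
    Involutive (decomposeFin.symm (j.succ, τ)) ↔ Involutive τ ∧ τ j = j := by
  simp only [Involutive, Fin.forall_fin_succ, decomposeFin_symm_apply_succ,
    decomposeFin_symm_apply_zero, swap_apply_def, Fin.succ_ne_zero, Fin.succ_inj, if_false]
  constructor
  · rintro ⟨h0, hs⟩
    have hj : τ j = j := by grind
    refine ⟨fun i => ?_, hj⟩
    have := hs i
    split_ifs at this <;> grind [decomposeFin_symm_apply_zero, decomposeFin_symm_apply_succ]
  · rintro ⟨h, hj⟩
    refine ⟨by simp [hj], fun i => ?_⟩
    split_ifs <;> grind [decomposeFin_symm_apply_zero, decomposeFin_symm_apply_succ]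

lemma numFixedPoints_decomposeFin_symm_succ {j : Fin n} (hj : τ j = j) :
    (decomposeFin.symm (j.succ, τ)).numFixedPoints + 1 = τ.numFixedPoints := by
  have : ({i | decomposeFin.symm (j.succ, τ) i.succ = i.succ} : Finset (Fin n)) =
      ({i | τ i = i} : Finset (Fin n)).erase j := by
    ext i
    simp only [decomposeFin_symm_apply_succ, swap_apply_def]
    grind
  rw [numFixedPoints, Fin.card_filter_univ_succ, if_neg (by simp), this,
    card_erase_add_one (by simpa using hj), numFixedPoints]

lemma involutionTerm_decomposeFin_symm_zero :
    involutionTerm (decomposeFin.symm (0, τ)) = X * involutionTerm τ := by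
  simp only [involutionTerm, involutive_decomposeFin_symm_zero_iff,
    numFixedPoints_decomposeFin_symm_zero, decomposeFin.symm_sign, if_pos, one_mul]
  split_ifs <;> ring

lemma sum_involutionTerm_decomposeFin_symm_succ :
    ∑ j : Fin n, involutionTerm (decomposeFin.symm (j.succ, τ)) =
      -derivative (involutionTerm τ) := by
  by_cases hτ : Involutive τ
  · have hterm : ∀ j, involutionTerm (decomposeFin.symm (j.succ, τ)) =
        if τ j = j then -C (sign τ : ℤ) * X ^ (τ.numFixedPoints - 1) else 0 := by
      intro j
      split_ifs with hj
      · rw [involutionTerm, if_pos ((involutive_decomposeFin_symm_succ_iff τ j).2 ⟨hτ, hj⟩),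
          decomposeFin.symm_sign, if_neg (Fin.succ_ne_zero j),
          ← numFixedPoints_decomposeFin_symm_succ τ hj, Nat.add_sub_cancel]
        simp
      · simp [involutionTerm, involutive_decomposeFin_symm_succ_iff, hj]
    rw [sum_congr rfl fun j _ => hterm j, sum_ite, sum_const_zero, add_zero, sum_const,
      involutionTerm, if_pos hτ, derivative_C_mul_X_pow]
    simp only [eq_intCast, numFixedPoints, neg_mul, smul_neg, nsmul_eq_mul, Int.cast_mul,
      Int.cast_natCast, neg_inj]
    ring
  · simp [involutionTerm, involutive_decomposeFin_symm_succ_iff, hτ]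

theorem sum_involutionTerm_eq_hermite (n : ℕ) :
    ∑ σ : Perm (Fin n), involutionTerm σ = hermite n := by
  induction n with
  | zero => simp [involutionTerm, Involutive, numFixedPoints]
  | succ n ih =>
    rw [← decomposeFin.symm.sum_comp, Fintype.sum_prod_type, Fin.sum_univ_succ, sum_comm,
      hermite_succ, ← ih, mul_sum, derivative_sum, sub_eq_add_neg, ← sum_neg_distrib]
    simp only [involutionTerm_decomposeFin_symm_zero, sum_involutionTerm_decomposeFin_symm_succ]

end Equiv.Perm

section LeibnizExpansion

variable {n : ℕ} (x : ℝ) (σ : Perm (Fin n))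

/-- The factor of the Leibniz term `∏ i, M (σ i) i` of `M = x • 1 + symGauss2 n ω` that depends on
the coordinate `ω a b`; it is constant unless `a ≤ b`. -/
noncomputable def leibnizFactor (a b : Fin n) (t : ℝ) : ℝ :=
  (if a = b then (if σ a = a then x + √2 * t else 1) else 1) *
    ((if σ a = b then (if a < b then t else 1) else 1) *
      (if σ b = a then (if a < b then t else 1) else 1))

lemma smul_one_add_symGauss2_apply (ω : Fin n → Fin n → ℝ) (i : Fin n) :
    (x • (1 : Matrix (Fin n) (Fin n) ℝ) + symGauss2 n ω) (σ i) i =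
      (if σ i = i then x + √2 * ω i i else 1) *
        ((if i < σ i then ω i (σ i) else 1) * (if σ i < i then ω (σ i) i else 1)) := by
  rcases lt_trichotomy i (σ i) with h | h | h
  · simp [symGauss2, h.ne', h.not_gt, h]
  · simp [symGauss2, ← h]
  · simp [symGauss2, h.ne, h.not_gt, h]

lemma prod_prod_leibnizFactor (ω : Fin n → Fin n → ℝ) :
    ∏ a, ∏ b, leibnizFactor x σ a b (ω a b) =
      ∏ i, (x • (1 : Matrix (Fin n) (Fin n) ℝ) + symGauss2 n ω) (σ i) i := by
  simp only [smul_one_add_symGauss2_apply, leibnizFactor, prod_mul_distrib]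
  rw [prod_comm (f := fun a b => if σ b = a then (if a < b then ω a b else 1) else 1)]
  simp only [prod_ite_eq, mem_univ, if_true]

lemma integrable_leibnizFactor (μ : ℝ) (v : NNReal) (a b : Fin n) :
    Integrable (leibnizFactor x σ a b) (gaussianReal μ v) := by
  have hid := integrable_id_gaussianReal μ v
  have hsq := integrable_mul_self_gaussianReal μ v
  unfold leibnizFactor
  split_ifs <;> (try simp only [mul_one, one_mul]) <;>
    first
    | exact integrable_const _
    | exact hid
    | exact hsq
    | exact (integrable_const x).add (hid.const_mul _)
    | (exfalso; grind)

lemma integral_leibnizFactor_of_involutive (hσ : Involutive σ) (a b : Fin n) :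
    ∫ t, leibnizFactor x σ a b t ∂gaussianReal 0 1 =
      if a = b then (if σ a = a then x else 1) else 1 := by
  rcases eq_or_ne a b with rfl | hab
  · by_cases h : σ a = a <;> simp [leibnizFactor, h, integral_affine_gaussianReal_zero]
  · have hba : σ b = a ↔ σ a = b := ⟨fun h => h ▸ hσ b, fun h => h ▸ hσ a⟩
    by_cases h : σ a = b <;> by_cases hlt : a < b <;>
      simp [leibnizFactor, hab, h, hba, hlt, integral_mul_self_gaussianReal_zero]

lemma exists_integral_leibnizFactor_eq_zero (hσ : ¬Involutive σ) :
    ∃ a b, ∫ t, leibnizFactor x σ a b t ∂gaussianReal 0 1 = 0 := by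
  obtain ⟨i, hi⟩ : ∃ i, σ (σ i) ≠ i := by simpa [Involutive] using hσ
  have hne : σ i ≠ i := fun h => hi (by rw [h, h])
  rcases hne.lt_or_gt with hlt | hgt
  · refine ⟨σ i, i, ?_⟩
    simp [leibnizFactor, hne, hi, hlt, integral_id_gaussianReal]
  · refine ⟨i, σ i, ?_⟩
    simp [leibnizFactor, hne.symm, hi, hgt, integral_id_gaussianReal]

lemma integral_prod_prod_leibnizFactor :
    ∫ ω, ∏ a, ∏ b, leibnizFactor x σ a b (ω a b)
        ∂(Measure.pi fun _ => Measure.pi fun _ => gaussianReal 0 1) =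
      if Involutive σ then x ^ σ.numFixedPoints else 0 := by
  rw [integral_prod_prod_eq_prod_prod]
  split_ifs with hσ
  · simp only [integral_leibnizFactor_of_involutive x σ hσ, prod_ite_eq, mem_univ, if_true]
    rw [prod_ite, prod_const_one, mul_one, prod_const, Perm.numFixedPoints]
  · obtain ⟨a, b, h⟩ := exists_integral_leibnizFactor_eq_zero x σ hσ
    exact prod_eq_zero (mem_univ a) (prod_eq_zero (mem_univ b) h)

lemma aeval_involutionTerm :
    aeval x σ.involutionTerm =
      (Perm.sign σ : ℤ) * (if Involutive σ then x ^ σ.numFixedPoints else 0) := by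
  unfold Perm.involutionTerm
  split_ifs <;> simp

end LeibnizExpansion

/-- `E[det(x I_n + A)] = H_n(x)` for a symmetric Gaussian matrix `A` with
`a_ii ∼ N(0,2)`, `a_ij ∼ N(0,1)` (i<j), independent up to symmetry. -/
theorem stmt_5 (n : ℕ) (x : ℝ) :
    (∫ ω : Fin n → Fin n → ℝ,
        (x • (1 : Matrix (Fin n) (Fin n) ℝ) + symGauss2 n ω).det
        ∂(Measure.pi fun _ : Fin n => Measure.pi fun _ : Fin n => gaussianReal 0 1)) =
      hermiteH n x := by
  rw [hermiteH_eq_aeval_hermite, ← Perm.sum_involutionTerm_eq_hermite, map_sum]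
  simp_rw [Matrix.det_apply, Units.smul_def, zsmul_eq_mul, ← prod_prod_leibnizFactor]
  rw [integral_finsetSum _ fun σ _ =>
    (integrable_prod_prod _ (integrable_leibnizFactor x σ 0 1)).const_mul _]
  refine sum_congr rfl fun σ _ => ?_
  rw [integral_const_mul, integral_prod_prod_leibnizFactor, aeval_involutionTerm]
end

section
/- Let T ∼ N_n(0, I_n) and Θ ∈ Sym(n); let v_0, v_1, v_2, … be nonnegative integers with v = Σ_{j≥0} v_j. Then E[∏_{j≥0}(TᵀΘʲT)^{v_j}] = E[‖T‖^{2v}] · E[∏_{j≥1}(TᵀΘʲT)^{v_j}] / E[‖T‖^{2(v−v_0)}]; i.e., ‖T‖² factors out because the direction T/‖T‖ is independent of ‖T‖. -/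
/-!
Gaussian integration by parts, `E[x ^ (k + 2)] = (k + 1) E[x ^ k]` for a standard Gaussian,
applied to each coordinate of each monomial, gives `E[p(T) ‖T‖²] = (n + m) E[p(T)]` for every
homogeneous polynomial `p` of degree `m`. Iterating,
`E[p(T) ‖T‖^(2k)] = ∏_{i<k} (n + m + 2i) E[p(T)]`, and the case `p = 1` identifies this factor
with `E[‖T‖^(2(d+k))] / E[‖T‖^(2d)]` when `m = 2d`.
The theorem is the case `p = ∏_{j≥1} (TᵀΘʲT)^(v_j)`, `k = v_0`, since `TᵀΘ⁰T = ‖T‖²`.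
-/

open Real MeasureTheory ProbabilityTheory

/-- The quadratic form `TᵀMT`. -/
def quadForm {n : ℕ} (M : Matrix (Fin n) (Fin n) ℝ) (t : Fin n → ℝ) : ℝ :=
  ∑ i, ∑ j, t i * M i j * t j

open MvPolynomial
open scoped NNReal

lemma integrable_pow_gaussianReal (μ : ℝ) (v : ℝ≥0) (k : ℕ) :
    Integrable (fun x : ℝ => x ^ k) (gaussianReal μ v) :=
  integrable_pow_of_mem_interior_integrableExpSet (by simp) k

lemma integrable_pow_mul_gaussianPDFReal (k : ℕ) :
    Integrable fun x : ℝ => x ^ k * gaussianPDFReal 0 1 x := by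
  have h := (integrable_rpow_mul_exp_neg_mul_sq (b := 1 / 2) (by norm_num) (s := k)
    (by linarith [(Nat.cast_nonneg k : (0 : ℝ) ≤ k)])).const_mul (√(2 * π))⁻¹
  refine h.congr (ae_of_all _ fun x => ?_)
  simp only [gaussianPDFReal_def, Real.rpow_natCast, NNReal.coe_one, mul_one, sub_zero]
  ring_nf

lemma hasDerivAt_gaussianPDFReal (x : ℝ) :
    HasDerivAt (gaussianPDFReal 0 1) (-x * gaussianPDFReal 0 1 x) x := by
  have h : HasDerivAt (fun y => (√(2 * π))⁻¹ * exp (-y ^ 2 / 2))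
      ((√(2 * π))⁻¹ * (exp (-x ^ 2 / 2) * (-(2 * x) / 2))) x := by
    have := (((hasDerivAt_pow 2 x).fun_neg.div_const 2).exp).const_mul (√(2 * π))⁻¹
    simpa using this
  convert h using 1
  · ext y; simp [gaussianPDFReal_def]
  · simp [gaussianPDFReal_def]; ring

lemma integral_pow_add_two_gaussianReal (k : ℕ) :
    ∫ x, x ^ (k + 2) ∂gaussianReal 0 1 = (k + 1) * ∫ x, x ^ k ∂gaussianReal 0 1 := by
  simp only [integral_gaussianReal_eq_integral_smul one_ne_zero, smul_eq_mul,
    mul_comm (gaussianPDFReal 0 1 _)]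
  have hderiv : ∀ x, HasDerivAt (fun x => x ^ (k + 1) * gaussianPDFReal 0 1 x)
      ((k + 1) * (x ^ k * gaussianPDFReal 0 1 x) - x ^ (k + 2) * gaussianPDFReal 0 1 x) x := by
    intro x
    refine ((hasDerivAt_pow (k + 1) x).mul (hasDerivAt_gaussianPDFReal x)).congr_deriv ?_
    rw [Nat.add_sub_cancel]
    push_cast
    ring
  have h := integral_eq_zero_of_hasDerivAt_of_integrable hderiv
    (((integrable_pow_mul_gaussianPDFReal k).const_mul _).sub
      (integrable_pow_mul_gaussianPDFReal (k + 2)))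
    (integrable_pow_mul_gaussianPDFReal (k + 1))
  rw [integral_sub ((integrable_pow_mul_gaussianPDFReal k).const_mul _)
    (integrable_pow_mul_gaussianPDFReal (k + 2)), integral_const_mul] at h
  linarith

lemma prod_pow_mul_pow_eq_prod_pow_update {ι M : Type*} [Fintype ι] [DecidableEq ι]
    [CommMonoid M] (x : ι → M) (d : ι → ℕ) (l : ι) (k : ℕ) :
    (∏ i, x i ^ d i) * x l ^ k = ∏ i, x i ^ Function.update d l (d l + k) i := by
  simp_rw [Function.apply_update (fun i e => x i ^ e),
    Finset.prod_update_of_mem (Finset.mem_univ l),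
    Finset.prod_eq_mul_prod_sdiff_singleton_of_mem (Finset.mem_univ l), pow_add]
  exact mul_right_comm _ _ _

noncomputable abbrev stdGaussianPi (ι : Type*) [Fintype ι] : Measure (ι → ℝ) :=
  Measure.pi fun _ : ι => gaussianReal 0 1

section StdGaussianPi

variable {ι : Type*} [Fintype ι]

lemma integrable_prod_pow_stdGaussianPi (d : ι → ℕ) :
    Integrable (fun x : ι → ℝ => ∏ i, x i ^ d i) (stdGaussianPi ι) :=
  Integrable.fintype_prod fun i => integrable_pow_gaussianReal 0 1 (d i)

lemma integral_prod_pow_mul_sq_stdGaussianPi [DecidableEq ι] (d : ι → ℕ) (l : ι) :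
    ∫ x, (∏ i, x i ^ d i) * x l ^ 2 ∂stdGaussianPi ι
      = (d l + 1) * ∫ x, ∏ i, x i ^ d i ∂stdGaussianPi ι := by
  simp_rw [prod_pow_mul_pow_eq_prod_pow_update,
    integral_fintype_prod_eq_prod (fun i y => y ^ Function.update d l (d l + 2) i),
    integral_fintype_prod_eq_prod (fun i y => y ^ d i),
    Function.apply_update (fun _ e => ∫ y, y ^ e ∂gaussianReal 0 1),
    Finset.prod_update_of_mem (Finset.mem_univ l),
    Finset.prod_eq_mul_prod_sdiff_singleton_of_mem (Finset.mem_univ l)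
      (fun i => ∫ y, y ^ d i ∂gaussianReal 0 1),
    integral_pow_add_two_gaussianReal]
  ring

lemma integrable_prod_pow_mul_sq_stdGaussianPi (d : ι → ℕ) (l : ι) :
    Integrable (fun x : ι → ℝ => (∏ i, x i ^ d i) * x l ^ 2) (stdGaussianPi ι) := by
  classical
  simpa only [prod_pow_mul_pow_eq_prod_pow_update] using integrable_prod_pow_stdGaussianPi _

lemma integrable_prod_pow_mul_sum_sq_stdGaussianPi (d : ι → ℕ) :
    Integrable (fun x : ι → ℝ => (∏ i, x i ^ d i) * ∑ l, x l ^ 2) (stdGaussianPi ι) := by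
  simp_rw [Finset.mul_sum]
  exact integrable_finsetSum _ fun l _ => integrable_prod_pow_mul_sq_stdGaussianPi d l

lemma integral_prod_pow_mul_sum_sq_stdGaussianPi (d : ι → ℕ) :
    ∫ x, (∏ i, x i ^ d i) * ∑ l, x l ^ 2 ∂stdGaussianPi ι
      = (Fintype.card ι + ∑ i, d i) * ∫ x, ∏ i, x i ^ d i ∂stdGaussianPi ι := by
  classical
  simp_rw [Finset.mul_sum]
  rw [integral_finsetSum _ fun l _ => integrable_prod_pow_mul_sq_stdGaussianPi d l]
  simp_rw [integral_prod_pow_mul_sq_stdGaussianPi, ← Finset.sum_mul, Finset.sum_add_distrib]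
  simp [add_comm]

lemma integral_eval_mul_sum_sq_stdGaussianPi {p : MvPolynomial ι ℝ} {m : ℕ}
    (hp : p.IsHomogeneous m) :
    ∫ x, eval x p * ∑ l, x l ^ 2 ∂stdGaussianPi ι
      = (Fintype.card ι + m) * ∫ x, eval x p ∂stdGaussianPi ι := by
  have hint (d : ι →₀ ℕ) := (integrable_prod_pow_stdGaussianPi d).const_mul (coeff d p)
  simp_rw [eval_eq', Finset.sum_mul, mul_assoc]
  rw [integral_finsetSum _ fun d _ => ?_, integral_finsetSum _ fun d _ => hint d, Finset.mul_sum]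
  · refine Finset.sum_congr rfl fun d hd => ?_
    have hdeg : ∑ i, d i = m := by
      rw [← Finsupp.degree_eq_sum, Finsupp.degree_eq_weight_one]
      exact hp (mem_support_iff.mp hd)
    rw [integral_const_mul, integral_const_mul, integral_prod_pow_mul_sum_sq_stdGaussianPi,
      ← hdeg]
    push_cast
    ring
  · exact (integrable_prod_pow_mul_sum_sq_stdGaussianPi d).const_mul _

lemma integral_eval_mul_sum_sq_pow_stdGaussianPi {p : MvPolynomial ι ℝ} {m : ℕ}
    (hp : p.IsHomogeneous m) (k : ℕ) :
    ∫ x, eval x p * (∑ l, x l ^ 2) ^ k ∂stdGaussianPi ι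
      = (∏ i ∈ Finset.range k, (Fintype.card ι + m + 2 * i : ℝ))
        * ∫ x, eval x p ∂stdGaussianPi ι := by
  induction k with
  | zero => simp
  | succ k ih =>
    have hpk : (p * (∑ l, X l ^ 2) ^ k).IsHomogeneous (m + 2 * k) :=
      hp.mul ((IsHomogeneous.sum _ _ _ fun l _ => isHomogeneous_X_pow l 2).pow k)
    have := integral_eval_mul_sum_sq_stdGaussianPi hpk
    simp only [eval_mul, eval_pow, map_sum, eval_X] at this
    simp_rw [pow_succ _ k, ← mul_assoc, this, ih, Finset.prod_range_succ]
    push_cast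
    ring

lemma integral_sum_sq_pow_stdGaussianPi (k : ℕ) :
    ∫ x, (∑ l, x l ^ 2) ^ k ∂stdGaussianPi ι
      = ∏ i ∈ Finset.range k, (Fintype.card ι + 2 * i : ℝ) := by
  simpa using integral_eval_mul_sum_sq_pow_stdGaussianPi (isHomogeneous_one ι ℝ) k

lemma integral_eval_stdGaussianPi_of_isEmpty [IsEmpty ι] {p : MvPolynomial ι ℝ} {m : ℕ}
    (hp : p.IsHomogeneous m) (hm : m ≠ 0) : ∫ x, eval x p ∂stdGaussianPi ι = 0 := by
  have hx (x : ι → ℝ) : eval x p = 0 := by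
    rw [Subsingleton.elim x 0, eval_zero, constantCoeff_eq]
    exact hp.coeff_eq_zero (by simpa using hm.symm)
  simp [hx]

theorem integral_eval_mul_sum_sq_pow_stdGaussianPi_eq_div {p : MvPolynomial ι ℝ} {d : ℕ}
    (hp : p.IsHomogeneous (2 * d)) (k : ℕ) :
    ∫ x, eval x p * (∑ l, x l ^ 2) ^ k ∂stdGaussianPi ι
      = (∫ x, (∑ l, x l ^ 2) ^ (d + k) ∂stdGaussianPi ι) * (∫ x, eval x p ∂stdGaussianPi ι)
        / ∫ x, (∑ l, x l ^ 2) ^ d ∂stdGaussianPi ι := by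
  simp_rw [integral_eval_mul_sum_sq_pow_stdGaussianPi hp, integral_sum_sq_pow_stdGaussianPi,
    Finset.prod_range_add]
  by_cases h : ∏ i ∈ Finset.range d, (Fintype.card ι + 2 * i : ℝ) = 0
  · -- Only for `card ι = 0 < d`; then `p`, homogeneous of positive degree, integrates to `0`.
    obtain ⟨i, hi, hi0⟩ := Finset.prod_eq_zero_iff.mp h
    have hcard : Fintype.card ι + 2 * i = 0 := by exact_mod_cast hi0
    have : IsEmpty ι := Fintype.card_eq_zero_iff.mp (by omega)
    rw [integral_eval_stdGaussianPi_of_isEmpty hp (by grind)]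
    simp
  · field_simp
    push_cast
    ring_nf

end StdGaussianPi

noncomputable def quadFormPoly {ι : Type*} [Fintype ι] (M : Matrix ι ι ℝ) : MvPolynomial ι ℝ :=
  ∑ i, ∑ j, C (M i j) * X i * X j

lemma isHomogeneous_quadFormPoly {ι : Type*} [Fintype ι] (M : Matrix ι ι ℝ) :
    (quadFormPoly M).IsHomogeneous 2 :=
  IsHomogeneous.sum _ _ _ fun i _ => IsHomogeneous.sum _ _ _ fun j _ =>
    (isHomogeneous_C_mul_X (M i j) i).mul (isHomogeneous_X ℝ j)

lemma eval_quadFormPoly {n : ℕ} (M : Matrix (Fin n) (Fin n) ℝ) (t : Fin n → ℝ) :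
    eval t (quadFormPoly M) = quadForm M t := by
  simp [quadFormPoly, quadForm, mul_comm]

lemma quadForm_one {n : ℕ} (t : Fin n → ℝ) :
    quadForm (1 : Matrix (Fin n) (Fin n) ℝ) t = ∑ i, t i ^ 2 := by
  simp [quadForm, Matrix.one_apply, sq]

theorem stmt_16_general (n N : ℕ) (Θ : Matrix (Fin n) (Fin n) ℝ)
    (v : ℕ → ℕ) :
    (∫ t : Fin n → ℝ, ∏ j ∈ Finset.range N, (quadForm (Θ ^ j) t) ^ (v j)
        ∂(Measure.pi fun _ : Fin n => gaussianReal 0 1)) =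
      (∫ t : Fin n → ℝ, (∑ i, t i ^ 2) ^ (∑ j ∈ Finset.range N, v j)
          ∂(Measure.pi fun _ : Fin n => gaussianReal 0 1)) *
        (∫ t : Fin n → ℝ, ∏ j ∈ Finset.Ico 1 N, (quadForm (Θ ^ j) t) ^ (v j)
            ∂(Measure.pi fun _ : Fin n => gaussianReal 0 1)) /
        (∫ t : Fin n → ℝ, (∑ i, t i ^ 2) ^ ((∑ j ∈ Finset.range N, v j) - v 0)
            ∂(Measure.pi fun _ : Fin n => gaussianReal 0 1)) := by
  rcases Nat.eq_zero_or_pos N with rfl | hN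
  · simp
  set P := ∏ j ∈ Finset.Ico 1 N, quadFormPoly (Θ ^ j) ^ v j
  have hP : P.IsHomogeneous (2 * ∑ j ∈ Finset.Ico 1 N, v j) := by
    rw [Finset.mul_sum]
    exact IsHomogeneous.prod _ _ _ fun j _ => (isHomogeneous_quadFormPoly _).pow _
  have hsum : ∑ j ∈ Finset.range N, v j = v 0 + ∑ j ∈ Finset.Ico 1 N, v j :=
    Finset.sum_range_eq_add_Ico v hN
  have hprod (t : Fin n → ℝ) : ∏ j ∈ Finset.range N, quadForm (Θ ^ j) t ^ v j
      = eval t P * (∑ i, t i ^ 2) ^ v 0 := by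
    simp [P, Finset.prod_range_eq_mul_Ico _ hN, eval_quadFormPoly, quadForm_one, mul_comm]
  have hP_eval (t : Fin n → ℝ) :
      ∏ j ∈ Finset.Ico 1 N, quadForm (Θ ^ j) t ^ v j = eval t P := by
    simp [P, eval_quadFormPoly]
  simp_rw [hprod, hP_eval, hsum, Nat.add_sub_cancel_left, add_comm (v 0)]
  exact integral_eval_mul_sum_sq_pow_stdGaussianPi_eq_div hP (v 0)

/-- For `T ∼ N_n(0, I_n)`, symmetric `Θ`, and exponents `v_0, …, v_{N-1}` with
`v = Σ_j v_j`:
`E[∏_{j≥0}(TᵀΘʲT)^{v_j}]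
   = E[‖T‖^{2v}] · E[∏_{j≥1}(TᵀΘʲT)^{v_j}] / E[‖T‖^{2(v−v_0)}]`. -/
theorem stmt_16 (n N : ℕ) (Θ : Matrix (Fin n) (Fin n) ℝ) (hΘ : Θ.IsSymm)
    (v : ℕ → ℕ) :
    (∫ t : Fin n → ℝ, ∏ j ∈ Finset.range N, (quadForm (Θ ^ j) t) ^ (v j)
        ∂(Measure.pi fun _ : Fin n => gaussianReal 0 1)) =
      (∫ t : Fin n → ℝ, (∑ i, t i ^ 2) ^ (∑ j ∈ Finset.range N, v j)
          ∂(Measure.pi fun _ : Fin n => gaussianReal 0 1)) *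
        (∫ t : Fin n → ℝ, ∏ j ∈ Finset.Ico 1 N, (quadForm (Θ ^ j) t) ^ (v j)
            ∂(Measure.pi fun _ : Fin n => gaussianReal 0 1)) /
        (∫ t : Fin n → ℝ, (∑ i, t i ^ 2) ^ ((∑ j ∈ Finset.range N, v j) - v 0)
            ∂(Measure.pi fun _ : Fin n => gaussianReal 0 1)) :=
  stmt_16_general n N Θ v
end
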